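/- For all n ≥ 1, (−1)^{n−1}·p_n(x) = (1+x)^{n−1}·R_n(1/(1+x)); equivalently, (−1)^{n−1}·p_n(x−1) equals the reversed Ramanujan polynomial x^{n−1}·R_n(1/x). -/

import Mathlib

open Polynomial Finset

/-- The Ramanujan polynomials: `R_1(y) = 1`, `R_{n+1}(y) = n(1+y)R_n(y) + y²R_n'(y)`. -/
noncomputable def R : ℕ → Polynomial ℤ
  | 0 => 0
  | 1 => 1
  | n+2 => C ((n : ℤ) + 1) * (1 + X) * R (n+1) + X ^ 2 * derivative (R (n+1))

/-- The Kalugin–Jeffrey polynomials: `p_1(x) = 1`,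
`p_{n+1}(x) = −(nx + 3n − 1)p_n(x) + (1+x)p_n'(x)`. -/
noncomputable def p : ℕ → Polynomial ℤ
  | 0 => 0
  | 1 => 1
  | n+2 => -(C ((n : ℤ) + 1) * X + C (3 * ((n : ℤ) + 1) - 1)) * p (n+1) +
      (1 + X) * derivative (p (n+1))

/-!
Let `T_n r = ∑_{k ≤ n} r_k (1+x)^{n-k}` (`reversedShift n r`), which is `(1+x)^n r(1/(1+x))`
when `deg r ≤ n`. On polynomials of degree `≤ n`, `T` conjugates the operator
`r ↦ (n+1)(1+y) r + y² r'` of the Ramanujan recurrence into minus the operator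
`q ↦ -((n+1)x + 3n+2) q + (1+x) q'` of the recurrence for `p`. Both sides are additive in `r`,
so this only has to be checked on the monomials `y^k`, `k ≤ n`, where `T_n y^k = (1+x)^{n-k}`.
Since `deg R_{n+1} ≤ n`, induction on `n` then gives `(-1)^n p_{n+1} = T_n R_{n+1}`.
-/

namespace Polynomial

variable {S : Type*} [CommRing S]

noncomputable def reversedShift (n : ℕ) (r : S[X]) : S[X] :=
  ∑ k ∈ range (n + 1), C (r.coeff k) * (1 + X) ^ (n - k)

noncomputable def ramanujanOp (n : ℕ) (r : S[X]) : S[X] :=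
  C ((n : S) + 1) * (1 + X) * r + X ^ 2 * derivative r

noncomputable def kaluginJeffreyOp (n : ℕ) (q : S[X]) : S[X] :=
  -(C ((n : S) + 1) * X + C (3 * ((n : S) + 1) - 1)) * q + (1 + X) * derivative q

lemma reversedShift_add (n : ℕ) (r s : S[X]) :
    reversedShift n (r + s) = reversedShift n r + reversedShift n s := by
  simp only [reversedShift, coeff_add, C_add, add_mul, sum_add_distrib]

lemma reversedShift_C_mul_X_pow {n k : ℕ} (hk : k ≤ n) (a : S) :
    reversedShift n (C a * X ^ k) = C a * (1 + X) ^ (n - k) := by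
  rw [reversedShift, sum_eq_single_of_mem k (mem_range.2 (Nat.lt_succ_of_le hk))]
  · rw [coeff_C_mul_X_pow, if_pos rfl]
  · intro j _ hjk
    rw [coeff_C_mul_X_pow, if_neg hjk, C_0, zero_mul]

lemma ramanujanOp_add (n : ℕ) (r s : S[X]) :
    ramanujanOp n (r + s) = ramanujanOp n r + ramanujanOp n s := by
  simp only [ramanujanOp, derivative_add]
  ring

lemma ramanujanOp_C_mul_X_pow (n k : ℕ) (a : S) :
    ramanujanOp n (C a * X ^ k) =
      C (((n : S) + 1) * a) * X ^ k + C (((n : S) + 1 + k) * a) * X ^ (k + 1) := by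
  simp only [ramanujanOp, derivative_C_mul_X_pow, C_mul, C_add, map_natCast]
  cases k <;> simp only [Nat.cast_zero, Nat.cast_succ, Nat.add_sub_cancel] <;> ring

lemma kaluginJeffreyOp_add (n : ℕ) (q s : S[X]) :
    kaluginJeffreyOp n (q + s) = kaluginJeffreyOp n q + kaluginJeffreyOp n s := by
  simp only [kaluginJeffreyOp, derivative_add]
  ring

lemma kaluginJeffreyOp_C_mul (n : ℕ) (c : S) (q : S[X]) :
    kaluginJeffreyOp n (C c * q) = C c * kaluginJeffreyOp n q := by
  simp only [kaluginJeffreyOp, derivative_C_mul]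
  ring

lemma one_add_X_mul_derivative_one_add_X_pow (e : ℕ) :
    (1 + X : S[X]) * derivative ((1 + X) ^ e) = C (e : S) * (1 + X) ^ e := by
  cases e with
  | zero => simp
  | succ e =>
    rw [derivative_pow, derivative_add, derivative_one, derivative_X, Nat.add_sub_cancel,
      map_natCast]
    ring

lemma reversedShift_ramanujanOp {n : ℕ} {r : S[X]} (hr : r.natDegree ≤ n) :
    reversedShift (n + 1) (ramanujanOp n r) = -kaluginJeffreyOp n (reversedShift n r) := by
  refine induction_with_natDegree_le (fun r ↦ reversedShift (n + 1) (ramanujanOp n r) =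
    -kaluginJeffreyOp n (reversedShift n r)) n ?_ ?_ ?_ r hr
  · simp [reversedShift, ramanujanOp, kaluginJeffreyOp]
  · intro k a _ hk
    obtain ⟨e, rfl⟩ := Nat.exists_eq_add_of_le hk
    rw [ramanujanOp_C_mul_X_pow, reversedShift_add, reversedShift_C_mul_X_pow (by omega),
      reversedShift_C_mul_X_pow (by omega), reversedShift_C_mul_X_pow hk,
      kaluginJeffreyOp_C_mul, kaluginJeffreyOp, one_add_X_mul_derivative_one_add_X_pow,
      show k + e + 1 - k = e + 1 by omega, show k + e + 1 - (k + 1) = e by omega,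
      show k + e - k = e by omega]
    simp only [C_mul, C_add, C_sub, map_natCast, C_1, map_ofNat, Nat.cast_add]
    ring
  · intro f g _ _ hf hg
    rw [ramanujanOp_add, reversedShift_add, hf, hg, reversedShift_add, kaluginJeffreyOp_add,
      neg_add]

lemma natDegree_ramanujanOp_le {n : ℕ} {r : S[X]} (hr : r.natDegree ≤ n) :
    (ramanujanOp n r).natDegree ≤ n + 1 := by
  apply natDegree_add_le_of_degree_le
  · calc (C ((n : S) + 1) * (1 + X) * r).natDegree
        ≤ (C ((n : S) + 1) * (1 + X)).natDegree + r.natDegree := natDegree_mul_le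
      _ ≤ 1 + n := add_le_add (by compute_degree) hr
      _ = n + 1 := add_comm 1 n
  · rcases eq_or_ne r.natDegree 0 with h0 | h0
    · simp [derivative_of_natDegree_zero h0]
    · calc (X ^ 2 * derivative r).natDegree ≤ 2 + (derivative r).natDegree :=
          natDegree_mul_le.trans (by gcongr; exact natDegree_X_pow_le 2)
        _ ≤ 2 + (r.natDegree - 1) := by gcongr; exact natDegree_derivative_le r
        _ ≤ n + 1 := by omega

end Polynomial

lemma R_succ_succ (n : ℕ) : R (n + 2) = ramanujanOp n (R (n + 1)) := rfl

lemma p_succ_succ (n : ℕ) : p (n + 2) = kaluginJeffreyOp n (p (n + 1)) := rfl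

lemma natDegree_R_succ_le (n : ℕ) : (R (n + 1)).natDegree ≤ n := by
  induction n with
  | zero => simp [R]
  | succ n ih => exact R_succ_succ n ▸ natDegree_ramanujanOp_le ih

lemma neg_one_pow_smul_p_succ (n : ℕ) :
    (-1 : ℤ) ^ n • p (n + 1) = reversedShift n (R (n + 1)) := by
  induction n with
  | zero => simp [p, R, reversedShift]
  | succ n ih =>
    rw [smul_eq_C_mul] at ih ⊢
    rw [p_succ_succ, R_succ_succ, reversedShift_ramanujanOp (natDegree_R_succ_le n), ← ih,
      kaluginJeffreyOp_C_mul, pow_succ, C_mul, C_neg, C_1]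
    ring

theorem p_eq_reversed_ramanujan_general (n : ℕ) :
    ((-1 : ℤ) ^ (n - 1)) • p n =
      ∑ k ∈ Finset.range n, C ((R n).coeff k) * (1 + X) ^ (n - 1 - k) := by
  cases n with
  | zero => simp [p]
  | succ m => simpa only [Nat.add_sub_cancel, reversedShift] using neg_one_pow_smul_p_succ m

/-- For `n ≥ 1`, `(−1)^{n−1} p_n(x) = (1+x)^{n−1} R_n(1/(1+x))`, expressed as the
polynomial identity `(−1)^{n−1} p_n = ∑_{k=0}^{n-1} [y^k]R_n · (1+x)^{n−1−k}`. -/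
theorem p_eq_reversed_ramanujan (n : ℕ) (hn : 1 ≤ n) :
    ((-1 : ℤ) ^ (n - 1)) • p n =
      ∑ k ∈ Finset.range n, C ((R n).coeff k) * (1 + X) ^ (n - 1 - k) :=
  p_eq_reversed_ramanujan_general n
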